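/- arXiv:1508.03010 — 2 statements merged into one kernel-verified Lean document; each statement's English description precedes it below -/
import Mathlib

section
/- Pieri rule for elementary symmetric polynomials: for a partition λ with at most k parts and m ≤ k, the product s_λ · e_m in k variables equals the sum of s_μ over all partitions μ obtained from λ by adding m boxes with no two added boxes in the same row. -/
/-!
Multiplying the alternant `a_{λ+δ} = ∑_σ sgn σ · x^{σ(λ+δ)}` by the symmetric polynomial
`e_m = ∑_{|T| = m} x^T` and moving the permutation onto `e_m` gives
`a_{λ+δ} e_m = ∑_{|T| = m} a_{λ+1_T+δ}`. An alternant with two equal exponents vanishes, and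
if `λ + 1_T` is not a partition then some adjacent rows `i, i+1` have `λ_i = λ_{i+1}`,
`i ∉ T`, `i+1 ∈ T`, so the exponents of `a_{λ+1_T+δ}` in rows `i` and `i+1` coincide. The
surviving terms are exactly the `μ = λ + 1_T` obtained by adding a vertical strip.
-/

open MvPolynomial

/-- The alternant `a_{μ+δ}`; the Schur polynomial `s_μ` in `k` variables is
`a_{μ+δ} / a_δ`. -/
noncomputable def alternant {k : ℕ} (μ : Fin k → ℕ) : MvPolynomial (Fin k) ℤ :=
  ∑ σ : Equiv.Perm (Fin k),
    (Equiv.Perm.sign σ : ℤ) • ∏ i : Fin k, X (σ i) ^ (μ i + (k - 1 - (i : ℕ)))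

open Finset Equiv Equiv.Perm

namespace MvPolynomial

variable {ι R : Type*} [Fintype ι] [CommRing R]

theorem rename_prod_X_pow (σ : Perm ι) (e : ι → ℕ) :
    rename σ (∏ i, X i ^ e i : MvPolynomial ι R) = ∏ i, X (σ i) ^ e i := by
  simp [map_prod]

variable [DecidableEq ι]

theorem esymm_eq_sum_prod_X_pow_indicator (n : ℕ) :
    esymm ι R n = ∑ t ∈ powersetCard n univ, ∏ i, X i ^ (if i ∈ t then 1 else 0) := by
  simp [esymm, pow_ite, prod_ite_mem]

variable (R) in
noncomputable def antisymmMonomial (e : ι → ℕ) : MvPolynomial ι R :=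
  ∑ σ : Perm ι, (sign σ : ℤ) • ∏ i, X (σ i) ^ e i

theorem antisymmMonomial_eq_zero_of_apply_eq (e : ι → ℕ) {a b : ι} (hab : a ≠ b)
    (he : e a = e b) : antisymmMonomial R e = 0 :=
  sum_involution (fun σ _ => σ * swap a b)
    (fun σ _ => by
      have : ∏ i, (X (σ i) : MvPolynomial ι R) ^ e i = ∏ i, X ((σ * swap a b) i) ^ e i :=
        Fintype.prod_equiv (swap a b) _ _ (by simp [apply_swap_eq_self he])
      simp [this, sign_swap hab])
    (fun σ _ _ => (not_congr mul_swap_eq_iff).mpr hab) (fun _ _ => mem_univ _)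
    (fun σ _ => mul_swap_involutive a b σ)

theorem antisymmMonomial_mul_of_isSymmetric (e : ι → ℕ) {κ : Type*} (s : Finset κ)
    (f : κ → ι → ℕ) (hP : (∑ t ∈ s, ∏ i, X i ^ f t i : MvPolynomial ι R).IsSymmetric) :
    antisymmMonomial R e * ∑ t ∈ s, ∏ i, X i ^ f t i =
      ∑ t ∈ s, antisymmMonomial R (e + f t) := by
  simp_rw [antisymmMonomial, sum_mul]
  rw [sum_comm]
  refine sum_congr rfl fun σ _ => ?_
  rw [← hP σ, smul_mul_assoc, ← rename_prod_X_pow, ← map_mul, mul_sum, map_sum, smul_sum]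
  simp_rw [← prod_mul_distrib, ← pow_add, rename_prod_X_pow, Pi.add_apply]

end MvPolynomial

section Alternant

variable {k : ℕ}

theorem alternant_eq_antisymmMonomial (μ : Fin k → ℕ) :
    alternant μ = antisymmMonomial ℤ (fun i => μ i + (k - 1 - (i : ℕ))) := rfl

theorem alternant_eq_zero_of_not_antitone {lam μ : Fin k → ℕ} (hlam : Antitone lam)
    (hμlam : ∀ i, lam i ≤ μ i ∧ μ i ≤ lam i + 1) (hμ : ¬ Antitone μ) : alternant μ = 0 := by
  obtain _ | n := k
  · exact absurd (fun a => a.elim0) hμ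
  obtain ⟨i, hi⟩ : ∃ i : Fin n, μ i.castSucc < μ i.succ := by
    simpa [Fin.antitone_iff_succ_le] using hμ
  have hstep : μ i.succ = μ i.castSucc + 1 := by
    have := hlam i.castSucc_lt_succ.le
    have := hμlam i.castSucc
    have := hμlam i.succ
    omega
  refine antisymmMonomial_eq_zero_of_apply_eq _ i.castSucc_lt_succ.ne ?_
  simp only [Fin.val_castSucc, Fin.val_succ, hstep]
  omega

theorem alternant_mul_esymm (lam : Fin k → ℕ) (m : ℕ) :
    alternant lam * esymm (Fin k) ℤ m =
      ∑ t ∈ powersetCard m univ, alternant (fun i => lam i + if i ∈ t then 1 else 0) := by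
  rw [esymm_eq_sum_prod_X_pow_indicator, alternant_eq_antisymmMonomial,
    antisymmMonomial_mul_of_isSymmetric _ _ _
      (by rw [← esymm_eq_sum_prod_X_pow_indicator]; exact esymm_isSymmetric _ _ _)]
  refine sum_congr rfl fun t _ => congrArg _ (funext fun i => ?_)
  simp only [Pi.add_apply]
  ring

open scoped Classical in
theorem sum_filter_antitone_add_indicator {M : Type*} [AddCommMonoid M] (hk : 1 ≤ k) (m : ℕ)
    {lam : Fin k → ℕ} (hlam : Antitone lam) (f : (Fin k → ℕ) → M) :
    ∑ t ∈ powersetCard m univ with Antitone (fun i => lam i + if i ∈ t then 1 else 0),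
        f (fun i => lam i + if i ∈ t then 1 else 0) =
      ∑ μ ∈ (Fintype.piFinset fun _ : Fin k => range (lam ⟨0, hk⟩ + m + 1)).filter
          (fun μ : Fin k → ℕ => Antitone μ ∧ (∀ i, lam i ≤ μ i ∧ μ i ≤ lam i + 1) ∧
            (∑ i : Fin k, (μ i - lam i)) = m),
        f μ := by
  refine sum_nbij' (fun t i => lam i + if i ∈ t then 1 else 0)
    (fun μ => ({i | lam i < μ i} : Finset (Fin k))) ?_ ?_ ?_ ?_ (fun _ _ => rfl)
  · simp only [mem_filter, mem_powersetCard_univ, Fintype.mem_piFinset, mem_range, and_imp]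
    rintro t rfl hanti
    refine ⟨fun i => ?_, hanti, fun i => by split <;> omega, by simp⟩
    have := hlam (show (⟨0, hk⟩ : Fin k) ≤ i from Nat.zero_le _)
    split
    · have := card_pos.mpr ⟨i, ‹_›⟩
      omega
    · omega
  · simp only [mem_filter, mem_powersetCard_univ, Fintype.mem_piFinset, mem_range, and_imp]
    intro μ _ hanti hμ hsum
    refine ⟨?_, ?_⟩
    · rw [card_filter, ← hsum]
      exact sum_congr rfl fun i _ => by have := hμ i; split <;> omega
    · convert hanti using 2 with i
      have := hμ i
      simp only [mem_univ, true_and]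
      split <;> omega
  · intro t _
    ext i
    by_cases hi : i ∈ t <;> simp [hi]
  · simp only [mem_filter, Fintype.mem_piFinset, mem_range, and_imp]
    intro μ _ _ hμ _
    funext i
    have := hμ i
    simp only [mem_univ, true_and]
    split <;> omega

end Alternant

open scoped Classical in
/-- The Pieri rule with both sides multiplied by the Vandermonde alternant `a_δ`. -/
theorem statement15_general (k m : ℕ) (hk : 1 ≤ k)
    (lam : Fin k → ℕ) (hlam : Antitone lam) :
    alternant lam * esymm (Fin k) ℤ m =
      ∑ μ ∈ (Fintype.piFinset fun _ : Fin k => Finset.range (lam ⟨0, hk⟩ + m + 1)).filter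
          (fun μ : Fin k → ℕ => Antitone μ ∧
            (∀ i, lam i ≤ μ i ∧ μ i ≤ lam i + 1) ∧
            (∑ i : Fin k, (μ i - lam i)) = m),
        alternant μ := by
  rw [alternant_mul_esymm, ← sum_filter_of_ne fun t _ ht => by_contra fun h =>
    ht (alternant_eq_zero_of_not_antitone hlam (fun i => by split <;> omega) h)]
  exact sum_filter_antitone_add_indicator hk m hlam alternant

open scoped Classical in
/-- Pieri rule for elementary symmetric polynomials: for a partition `λ` with at most
`k` parts and `m ≤ k`, `s_λ · e_m = ∑ s_μ`, the sum over partitions `μ` obtained from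
`λ` by adding `m` boxes, no two in the same row (stated multiplied through by the
Vandermonde alternant `a_δ`; partitions with more than `k` rows contribute `0`). -/
theorem statement15 (k m : ℕ) (hk : 1 ≤ k) (hm : m ≤ k)
    (lam : Fin k → ℕ) (hlam : Antitone lam) :
    alternant lam * esymm (Fin k) ℤ m =
      ∑ μ ∈ (Fintype.piFinset fun _ : Fin k => Finset.range (lam ⟨0, hk⟩ + m + 1)).filter
          (fun μ : Fin k → ℕ => Antitone μ ∧
            (∀ i, lam i ≤ μ i ∧ μ i ≤ lam i + 1) ∧
            (∑ i : Fin k, (μ i - lam i)) = m),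
        alternant μ :=
  statement15_general k m hk lam hlam
end

section
/- Pieri rule for complete homogeneous symmetric polynomials: for a partition λ with at most k parts, s_λ · h_m equals the sum of s_μ over partitions μ obtained from λ by adding m boxes with no two added boxes in the same column. -/
/-!
Write `e = λ + δ` with `δ = (k-1, …, 1, 0)` and `a_F = det (x_i ^ F_j)`, so that `alternant μ`
is `a_{μ+δ}`. Since `h_m` is symmetric, `a_e · h_m = ∑_{|β| = m} a_{e+β}`. Call `i` an overlap
of `F = e + β` if `F_{i+1} ≥ e_i`. Swapping the entries `i` and `i+1` of `F` at its last overlap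
keeps `e ≤ F`, keeps that overlap the last one and changes the sign of `a_F`, so all terms with an
overlap cancel. The surviving `F` satisfy `F_{i+1} < e_i ≤ F_i`, which says precisely that
`μ = λ + β` is a partition with `λ ≤ μ` and `μ_{i+1} ≤ λ_i`, and for these `a_F = a_{μ+δ}`.
-/

open MvPolynomial

open Finset

theorem hsymm_eq_sum_antidiagonalTuple (R : Type*) [CommSemiring R] (k n : ℕ) :
    hsymm (Fin k) R n = ∑ β ∈ Nat.antidiagonalTuple k n, ∏ i, X i ^ β i := by
  rw [hsymm, ← sum_coe_sort (Nat.antidiagonalTuple k n)]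
  refine Fintype.sum_equiv ((Sym.equivNatSumOfFintype (Fin k) n).trans
    (Equiv.subtypeEquivRight fun β => Nat.mem_antidiagonalTuple.symm)) _ _ fun s => ?_
  simp only [prod_multiset_map_count, Equiv.trans_apply, Equiv.subtypeEquivRight_apply_coe,
    Sym.coe_equivNatSumOfFintype_apply_apply]
  exact prod_subset (subset_univ _) fun i _ hi => by
    rw [Multiset.count_eq_zero_of_notMem (by simpa using hi), pow_zero]

section Alternant

variable (R : Type*) [CommRing R] {k : ℕ}

noncomputable def altPoly (e : Fin k → ℕ) : MvPolynomial (Fin k) R :=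
  (Matrix.of fun i j => X i ^ e j).det

variable {R}

theorem altPoly_eq_sum_perm (e : Fin k → ℕ) :
    altPoly R e = ∑ σ : Equiv.Perm (Fin k), Equiv.Perm.sign σ • rename σ (∏ i, X i ^ e i) := by
  simp [altPoly, Matrix.det_apply, map_prod]

theorem altPoly_comp_swap (e : Fin k → ℕ) {a b : Fin k} (hab : a ≠ b) :
    altPoly R (e ∘ Equiv.swap a b) = -altPoly R e := by
  have h := Matrix.det_permute' (Equiv.swap a b)
    (Matrix.of fun i j => (X i : MvPolynomial (Fin k) R) ^ e j)
  rw [Equiv.Perm.sign_swap hab] at h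
  simp only [Units.val_neg, Units.val_one, Int.cast_neg, Int.cast_one, neg_one_mul] at h
  exact h

theorem altPoly_eq_zero_of_eq {e : Fin k → ℕ} {a b : Fin k} (hab : a ≠ b) (h : e a = e b) :
    altPoly R e = 0 :=
  Matrix.det_zero_of_column_eq hab fun i => by simp [h]

theorem altPoly_mul_hsymm (e : Fin k → ℕ) (n : ℕ) :
    altPoly R e * hsymm (Fin k) R n = ∑ β ∈ Nat.antidiagonalTuple k n, altPoly R (e + β) := by
  have monomial_mul : (∏ i, X i ^ e i) * hsymm (Fin k) R n =
      ∑ β ∈ Nat.antidiagonalTuple k n, ∏ i, X i ^ (e + β) i := by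
    simp [hsymm_eq_sum_antidiagonalTuple, mul_sum, pow_add, prod_mul_distrib]
  have term (σ : Equiv.Perm (Fin k)) :
      (Equiv.Perm.sign σ • rename σ (∏ i, X i ^ e i)) * hsymm (Fin k) R n =
        Equiv.Perm.sign σ • rename σ ((∏ i, X i ^ e i) * hsymm (Fin k) R n) := by
    rw [smul_mul_assoc, map_mul, rename_hsymm]
  simp_rw [altPoly_eq_sum_perm, sum_mul, term, monomial_mul, map_sum, smul_sum]
  exact sum_comm

theorem alternant_eq_altPoly (μ : Fin k → ℕ) :
    alternant μ = altPoly ℤ (μ + fun i : Fin k => k - 1 - (i : ℕ)) := by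
  simp [alternant, altPoly_eq_sum_perm, map_prod, Units.smul_def]

end Alternant

section Overlap

variable {R : Type*} [CommRing R] {n : ℕ} (e : Fin (n + 1) → ℕ)

def overlapSet (F : Fin (n + 1) → ℕ) : Finset (Fin n) :=
  univ.filter fun i => e i.castSucc ≤ F i.succ

variable {e}

theorem mem_overlapSet {F : Fin (n + 1) → ℕ} {i : Fin n} :
    i ∈ overlapSet e F ↔ e i.castSucc ≤ F i.succ := by
  simp [overlapSet]

theorem mem_overlapSet_comp_swap_self {F : Fin (n + 1) → ℕ} {i : Fin n}
    (h : e i.castSucc ≤ F i.castSucc) :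
    i ∈ overlapSet e (F ∘ Equiv.swap i.castSucc i.succ) := by
  simpa [mem_overlapSet] using h

theorem mem_overlapSet_comp_swap_of_lt {F : Fin (n + 1) → ℕ} {i j : Fin n} (hij : i < j) :
    j ∈ overlapSet e (F ∘ Equiv.swap i.castSucc i.succ) ↔ j ∈ overlapSet e F := by
  have h₁ : j.succ ≠ i.castSucc := by
    simp only [ne_eq, Fin.ext_iff, Fin.val_succ, Fin.val_castSucc]; omega
  have h₂ : j.succ ≠ i.succ := by
    rw [ne_eq, Fin.succ_inj]; exact hij.ne'
  simp [mem_overlapSet, Equiv.swap_apply_of_ne_of_ne h₁ h₂]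

theorem max'_overlapSet_comp_swap {F : Fin (n + 1) → ℕ} (hF : e ≤ F)
    (h : (overlapSet e F).Nonempty) (h' : (overlapSet e (F ∘ Equiv.swap
      ((overlapSet e F).max' h).castSucc ((overlapSet e F).max' h).succ)).Nonempty) :
    (overlapSet e (F ∘ Equiv.swap
      ((overlapSet e F).max' h).castSucc ((overlapSet e F).max' h).succ)).max' h' =
      (overlapSet e F).max' h := by
  refine (max'_eq_iff _ _ _).2 ⟨mem_overlapSet_comp_swap_self (hF _), fun j hj => ?_⟩
  by_contra! hlt
  exact hlt.not_ge (le_max' _ _ ((mem_overlapSet_comp_swap_of_lt hlt).1 hj))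

variable (e) in
noncomputable def swapLastOverlap (F : Fin (n + 1) → ℕ) : Fin (n + 1) → ℕ :=
  if h : (overlapSet e F).Nonempty then
    F ∘ Equiv.swap ((overlapSet e F).max' h).castSucc ((overlapSet e F).max' h).succ
  else F

theorem swapLastOverlap_of_nonempty {F : Fin (n + 1) → ℕ} (h : (overlapSet e F).Nonempty) :
    swapLastOverlap e F =
      F ∘ Equiv.swap ((overlapSet e F).max' h).castSucc ((overlapSet e F).max' h).succ :=
  dif_pos h

theorem le_swapLastOverlap (he : Antitone e) {F : Fin (n + 1) → ℕ} (hF : e ≤ F) :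
    e ≤ swapLastOverlap e F := by
  unfold swapLastOverlap
  split_ifs with h
  · set i := (overlapSet e F).max' h
    have hi : e i.castSucc ≤ F i.succ := mem_overlapSet.1 (max'_mem _ h)
    intro j
    rcases eq_or_ne j i.castSucc with rfl | hj₁
    · simpa using hi
    rcases eq_or_ne j i.succ with rfl | hj₂
    · simpa using (he (Fin.castSucc_le_succ i)).trans (hF _)
    · simpa [Equiv.swap_apply_of_ne_of_ne hj₁ hj₂] using hF j
  · exact hF

theorem swapLastOverlap_swapLastOverlap {F : Fin (n + 1) → ℕ} (hF : e ≤ F) :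
    swapLastOverlap e (swapLastOverlap e F) = F := by
  by_cases h : (overlapSet e F).Nonempty
  · have h' : (overlapSet e (F ∘ Equiv.swap ((overlapSet e F).max' h).castSucc
        ((overlapSet e F).max' h).succ)).Nonempty := ⟨_, mem_overlapSet_comp_swap_self (hF _)⟩
    rw [swapLastOverlap_of_nonempty h, swapLastOverlap_of_nonempty h',
      max'_overlapSet_comp_swap hF h h']
    ext j
    simp
  · simp [swapLastOverlap, h]

theorem overlapSet_swapLastOverlap_nonempty {F : Fin (n + 1) → ℕ} (hF : e ≤ F)
    (h : (overlapSet e F).Nonempty) : (overlapSet e (swapLastOverlap e F)).Nonempty := by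
  rw [swapLastOverlap_of_nonempty h]
  exact ⟨_, mem_overlapSet_comp_swap_self (hF _)⟩

theorem sum_swapLastOverlap (F : Fin (n + 1) → ℕ) :
    ∑ i, swapLastOverlap e F i = ∑ i, F i := by
  unfold swapLastOverlap
  split_ifs
  · exact Equiv.sum_comp _ F
  · rfl

theorem altPoly_swapLastOverlap {F : Fin (n + 1) → ℕ} (h : (overlapSet e F).Nonempty) :
    altPoly R (swapLastOverlap e F) = -altPoly R F := by
  rw [swapLastOverlap_of_nonempty h]
  exact altPoly_comp_swap F Fin.castSucc_lt_succ.ne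

theorem altPoly_eq_zero_of_swapLastOverlap_eq {F : Fin (n + 1) → ℕ}
    (h : (overlapSet e F).Nonempty) (hfix : swapLastOverlap e F = F) : altPoly R F = 0 := by
  rw [swapLastOverlap_of_nonempty h] at hfix
  refine altPoly_eq_zero_of_eq (Fin.castSucc_lt_succ (i := (overlapSet e F).max' h)).ne ?_
  simpa using (congrFun hfix ((overlapSet e F).max' h).castSucc).symm

theorem sum_altPoly_add_eq_sum_filter (he : Antitone e) (m : ℕ) :
    ∑ β ∈ Nat.antidiagonalTuple (n + 1) m, altPoly R (e + β) =
      ∑ β ∈ Nat.antidiagonalTuple (n + 1) m with overlapSet e (e + β) = ∅, altPoly R (e + β) := by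
  rw [← sum_filter_add_sum_filter_not _ (fun β => overlapSet e (e + β) = ∅), add_eq_left]
  have add_tsub_swap (β : Fin (n + 1) → ℕ) :
      e + (swapLastOverlap e (e + β) - e) = swapLastOverlap e (e + β) :=
    add_tsub_cancel_of_le (le_swapLastOverlap he le_self_add)
  have overlap_of_mem {β}
      (hβ : β ∈ {β ∈ Nat.antidiagonalTuple (n + 1) m | ¬overlapSet e (e + β) = ∅}) :
      (overlapSet e (e + β)).Nonempty :=
    nonempty_iff_ne_empty.2 (mem_filter.1 hβ).2
  refine sum_involution (fun β _ => swapLastOverlap e (e + β) - e) (fun β hβ => ?_)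
    (fun β hβ hne heq => ?_) (fun β hβ => ?_) (fun β hβ => ?_)
  · rw [add_tsub_swap, altPoly_swapLastOverlap (overlap_of_mem hβ), add_neg_cancel]
  · exact hne <| altPoly_eq_zero_of_swapLastOverlap_eq (overlap_of_mem hβ)
      (by rw [← add_tsub_swap, heq])
  · have hsum := congrArg (fun F => ∑ i, F i) (add_tsub_swap β)
    simp only [Pi.add_apply, sum_add_distrib, sum_swapLastOverlap] at hsum
    rw [mem_filter, Nat.mem_antidiagonalTuple, ← ne_eq, ← nonempty_iff_ne_empty, add_tsub_swap]
    exact ⟨by rw [add_left_cancel hsum]; exact Nat.mem_antidiagonalTuple.1 (mem_filter.1 hβ).1,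
      overlapSet_swapLastOverlap_nonempty le_self_add (overlap_of_mem hβ)⟩
  · simp only [add_tsub_swap, swapLastOverlap_swapLastOverlap le_self_add, add_tsub_cancel_left]

end Overlap

theorem Fin.forall_adjacent_iff {n : ℕ} {P : Fin (n + 1) → Fin (n + 1) → Prop} :
    (∀ i j : Fin (n + 1), (j : ℕ) = i + 1 → P i j) ↔ ∀ i : Fin n, P i.castSucc i.succ := by
  refine ⟨fun h i => h _ _ (by simp), fun h i j hij => ?_⟩
  have hi : (i : ℕ) < n := by omega
  convert h ⟨i, hi⟩ <;> ext <;> simp [hij]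

theorem overlapSet_add_eq_empty_iff {n : ℕ} {lam δ β : Fin (n + 1) → ℕ}
    (hδ : ∀ i : Fin n, δ i.castSucc = δ i.succ + 1) :
    overlapSet (lam + δ) (lam + δ + β) = ∅ ↔
      ∀ i : Fin n, lam i.succ + β i.succ ≤ lam i.castSucc := by
  simp only [← not_nonempty_iff_eq_empty, Finset.Nonempty, mem_overlapSet, not_exists, not_le,
    Pi.add_apply, hδ]
  exact forall_congr' fun i => by omega

open scoped Classical in
theorem sum_alternant_eq_sum_antidiagonalTuple {n : ℕ} (m : ℕ) {lam : Fin (n + 1) → ℕ}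
    (hlam : Antitone lam) :
    ∑ μ ∈ (Fintype.piFinset fun _ : Fin (n + 1) => range (lam 0 + m + 1)).filter
        (fun μ : Fin (n + 1) → ℕ => Antitone μ ∧ (∀ i, lam i ≤ μ i) ∧
          (∀ i j : Fin (n + 1), (j : ℕ) = (i : ℕ) + 1 → μ j ≤ lam i) ∧
          (∑ i : Fin (n + 1), (μ i - lam i)) = m),
        alternant μ =
      ∑ β ∈ Nat.antidiagonalTuple (n + 1) m with
        ∀ i : Fin n, lam i.succ + β i.succ ≤ lam i.castSucc, alternant (lam + β) := by
  symm
  refine sum_nbij' (fun β => lam + β) (fun μ => μ - lam) (fun β hβ => ?_) (fun μ hμ => ?_)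
    (fun β _ => add_tsub_cancel_left lam β) (fun μ hμ => ?_) (fun _ _ => rfl)
  · simp only [mem_filter, Nat.mem_antidiagonalTuple] at hβ
    obtain ⟨hsum, hstrip⟩ := hβ
    simp only [mem_filter, Fintype.mem_piFinset, mem_range, Pi.add_apply,
      Fin.forall_adjacent_iff, add_tsub_cancel_left, hsum, le_add_iff_nonneg_right, zero_le,
      implies_true, and_true, Fin.antitone_iff_succ_le]
    refine ⟨fun i => ?_, fun i => (hstrip i).trans le_self_add, trivial, hstrip⟩
    have := hlam (Fin.zero_le i)
    have := hsum ▸ single_le_sum (fun j _ => Nat.zero_le (β j)) (mem_univ i)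
    omega
  · simp only [mem_filter, Fin.forall_adjacent_iff] at hμ
    obtain ⟨-, -, hle, hstrip, hsum⟩ := hμ
    simp only [mem_filter, Nat.mem_antidiagonalTuple, Pi.sub_apply, hsum, true_and]
    exact fun i => by have := hle i.succ; have := hstrip i; omega
  · exact add_tsub_cancel_of_le (mem_filter.1 hμ).2.2.1

open scoped Classical in
/-- Pieri rule for complete homogeneous symmetric polynomials: for a partition `λ`
with at most `k` parts, `s_λ · h_m = ∑ s_μ`, the sum over partitions `μ` obtained from
`λ` by adding `m` boxes, no two in the same column, i.e. `μ_{i+1} ≤ λ_i` (stated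
multiplied through by the Vandermonde alternant `a_δ`; partitions with more than
`k` rows contribute `0`). -/
theorem statement16 (k m : ℕ) (hk : 1 ≤ k)
    (lam : Fin k → ℕ) (hlam : Antitone lam) :
    alternant lam * hsymm (Fin k) ℤ m =
      ∑ μ ∈ (Fintype.piFinset fun _ : Fin k => Finset.range (lam ⟨0, hk⟩ + m + 1)).filter
          (fun μ : Fin k → ℕ => Antitone μ ∧
            (∀ i, lam i ≤ μ i) ∧
            (∀ i j : Fin k, (j : ℕ) = (i : ℕ) + 1 → μ j ≤ lam i) ∧
            (∑ i : Fin k, (μ i - lam i)) = m),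
        alternant μ := by
  obtain ⟨n, rfl⟩ : ∃ n, k = n + 1 := ⟨k - 1, by omega⟩
  set δ : Fin (n + 1) → ℕ := fun i => n + 1 - 1 - i
  have hδ (i : Fin n) : δ i.castSucc = δ i.succ + 1 := by
    simp only [δ, Fin.val_castSucc, Fin.val_succ]; omega
  have hδ_anti : Antitone δ := Fin.antitone_iff_succ_le.2 fun i => (hδ i).symm ▸ Nat.le_succ _
  rw [alternant_eq_altPoly, altPoly_mul_hsymm,
    sum_altPoly_add_eq_sum_filter (show Antitone (lam + δ) from hlam.add hδ_anti),
    Fin.mk_zero, sum_alternant_eq_sum_antidiagonalTuple m hlam]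
  refine sum_congr (filter_congr fun β _ => overlapSet_add_eq_empty_iff hδ) fun β _ => ?_
  rw [alternant_eq_altPoly, add_right_comm]
end
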